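/- Let U' = {(z₁, z₂) ∈ ℂ² : v − 2z₂z̄₂ > 0, v = z₁ + z̄₁}, let g = (v − 2z₂z̄₂)^{−1/2}(dz₁ − 2z̄₂dz₂)(dz̄₁ − 2z₂dz̄₂) + 4(v − 2z₂z̄₂)^{1/2} dz₂ dz̄₂, and for φ ∈ ℝ let J⁺_{e^{iφ}} = 2Re{ i e^{iφ} [ (2(v − 2z₂z̄₂)^{1/2})^{−1}(dz₁ − 2z̄₂dz₂) ⊗ (∂_{z̄₂} + 2z₂∂_{z̄₁}) − 2(v − 2z₂z̄₂)^{1/2} dz₂ ⊗ ∂_{z̄₁} ] }. Then at every point of U', J⁺_{e^{iφ}} is a real endomorphism of the tangent space with (J⁺_{e^{iφ}})² = −id and g(J⁺_{e^{iφ}}X, J⁺_{e^{iφ}}Y) = g(X,Y) for all tangent vectors X, Y. -/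

import Mathlib

noncomputable section

/-- `w(z₁,z₂) = v − 2z₂z̄₂` where `v = z₁ + z̄₁ = 2 Re z₁`. -/
def wDef (p : ℂ × ℂ) : ℝ := 2 * p.1.re - 2 * Complex.normSq p.2

/-- The region `U' = {(z₁,z₂) ∈ ℂ² : v − 2z₂z̄₂ > 0}`. -/
def Uprime : Set (ℂ × ℂ) := {p | 0 < wDef p}

/-- `K = log(v − 2z₂z̄₂)`. -/
def KDef (p : ℂ × ℂ) : ℝ := Real.log (wDef p)

/-- `K` as a function of `v` at fixed `z₂`. -/
def KofV (z₂ : ℂ) (v : ℝ) : ℝ := Real.log (v - 2 * Complex.normSq z₂)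

/-- `K_v = ∂K/∂v`. -/
def Kv (p : ℂ × ℂ) : ℝ := deriv (KofV p.2) (2 * p.1.re)

/-- `K_vv = ∂²K/∂v²`. -/
def Kvv (p : ℂ × ℂ) : ℝ := deriv (deriv (KofV p.2)) (2 * p.1.re)

/-- The Wirtinger derivative `∂G/∂z = ½(∂_x G − i ∂_y G)` of `G : ℂ → ℂ` at `c`. -/
def wirtD (G : ℂ → ℂ) (c : ℂ) : ℂ :=
  (deriv (fun x : ℝ => G ((x : ℂ) + (c.im : ℂ) * Complex.I)) c.re -
    Complex.I * deriv (fun y : ℝ => G ((c.re : ℂ) + (y : ℂ) * Complex.I)) c.im) / 2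

/-- The Wirtinger derivative `∂G/∂z̄ = ½(∂_x G + i ∂_y G)` of `G : ℂ → ℂ` at `c`. -/
def wirtDbar (G : ℂ → ℂ) (c : ℂ) : ℂ :=
  (deriv (fun x : ℝ => G ((x : ℂ) + (c.im : ℂ) * Complex.I)) c.re +
    Complex.I * deriv (fun y : ℝ => G ((c.re : ℂ) + (y : ℂ) * Complex.I)) c.im) / 2

/-- `K_{v2} = ∂²K/∂v∂z₂` (Wirtinger derivative in `z₂` of `K_v`). -/
def Kv2 (p : ℂ × ℂ) : ℂ :=
  wirtD (fun z₂ => ((deriv (KofV z₂) (2 * p.1.re) : ℝ) : ℂ)) p.2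

/-- `K_{v2̄} = ∂²K/∂v∂z̄₂`. -/
def Kv2bar (p : ℂ × ℂ) : ℂ :=
  wirtDbar (fun z₂ => ((deriv (KofV z₂) (2 * p.1.re) : ℝ) : ℂ)) p.2

/-- `K_{22̄} = ∂²K/∂z₂∂z̄₂` (at fixed `v`). -/
def K22bar (p : ℂ × ℂ) : ℂ :=
  wirtDbar (fun z₂ =>
    wirtD (fun u => ((Real.log (2 * p.1.re - 2 * Complex.normSq u) : ℝ) : ℂ)) z₂) p.2

/-- The 1-form `dz₁ − 2z̄₂dz₂` evaluated on a real tangent vector `X ∈ ℂ² ≅ ℝ⁴`. -/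
def AForm (p : ℂ × ℂ) (X : ℂ × ℂ) : ℂ := X.1 - 2 * starRingEnd ℂ p.2 * X.2

/-- The explicit Ricci-flat metric
`g = (v − 2z₂z̄₂)^{−1/2}(dz₁ − 2z̄₂dz₂)(dz̄₁ − 2z₂dz̄₂) + 4(v − 2z₂z̄₂)^{1/2} dz₂ dz̄₂`
(with `2αβ = α⊗β + β⊗α`) on real tangent vectors. -/
def gExpl (p : ℂ × ℂ) (X Y : ℂ × ℂ) : ℝ :=
  1 / Real.sqrt (wDef p) * (AForm p X * starRingEnd ℂ (AForm p Y)).re +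
    4 * Real.sqrt (wDef p) * (X.2 * starRingEnd ℂ Y.2).re

/-- The almost complex structure
`J⁺_{e^{iφ}} = 2Re{ i e^{iφ} [ (2(v − 2z₂z̄₂)^{1/2})^{−1}(dz₁ − 2z̄₂dz₂) ⊗ (∂_{z̄₂} + 2z₂∂_{z̄₁}) − 2(v − 2z₂z̄₂)^{1/2} dz₂ ⊗ ∂_{z̄₁} ] }`
as a real endomorphism of the tangent space `ℂ² ≅ ℝ⁴`: a real tangent vector `X`
corresponds to `X.1 ∂_{z₁} + conj X.1 ∂_{z̄₁} + X.2 ∂_{z₂} + conj X.2 ∂_{z̄₂}` in the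
complexified tangent space; the components below are the `∂_{z₁}`- and
`∂_{z₂}`-coefficients of `(T + T̄)(X)`. -/
def JExpl (φ : ℝ) (p : ℂ × ℂ) (X : ℂ × ℂ) : ℂ × ℂ :=
  (starRingEnd ℂ (Complex.I * Complex.exp ((φ : ℂ) * Complex.I) *
      (AForm p X / (2 * (Real.sqrt (wDef p) : ℂ)) * (2 * p.2) -
        2 * (Real.sqrt (wDef p) : ℂ) * X.2)),
   starRingEnd ℂ (Complex.I * Complex.exp ((φ : ℂ) * Complex.I) *
      (AForm p X / (2 * (Real.sqrt (wDef p) : ℂ)))))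


/-! In the coframe `a = dz₁ − 2z̄₂dz₂`, `b = dz₂` the structure `J = J⁺_{e^{iφ}}` reads
`a ∘ J = −2√w ē b̄` and `b ∘ J = ē ā / (2√w)` with `e = i e^{iφ}`. As `|e| = 1`, applying `J`
twice gives `a ↦ −a`, `b ↦ −b`, and `J` exchanges the two summands of `g`, whose weights
`1/√w` and `4√w` are balanced exactly by the factors `2√w`. -/

open Complex ComplexConjugate

lemma I_mul_exp_mul_conj_self (φ : ℝ) : I * exp (φ * I) * conj (I * exp (φ * I)) = 1 := by
  rw [mul_conj', norm_mul, norm_I, norm_exp_ofReal_mul_I]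
  norm_num

lemma AForm_add (p X Y : ℂ × ℂ) : AForm p (X + Y) = AForm p X + AForm p Y := by
  simp only [AForm, Prod.fst_add, Prod.snd_add]
  ring

lemma AForm_smul (p : ℂ × ℂ) (c : ℝ) (X : ℂ × ℂ) : AForm p (c • X) = c * AForm p X := by
  simp only [AForm, Prod.smul_fst, Prod.smul_snd, real_smul]
  ring

lemma fst_eq_AForm_add (p X : ℂ × ℂ) : X.1 = AForm p X + 2 * conj p.2 * X.2 := by
  rw [AForm]
  ring

lemma ofReal_sqrt_wDef_ne_zero {p : ℂ × ℂ} (hp : p ∈ Uprime) : (√(wDef p) : ℂ) ≠ 0 :=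
  ofReal_ne_zero.mpr (Real.sqrt_pos.mpr hp).ne'

lemma JExpl_add (φ : ℝ) (p X Y : ℂ × ℂ) :
    JExpl φ p (X + Y) = JExpl φ p X + JExpl φ p Y := by
  refine Prod.ext ?_ ?_ <;>
    simp only [JExpl, AForm_add, Prod.fst_add, Prod.snd_add, ← map_add] <;>
    congr 1 <;>
    ring

lemma JExpl_smul (φ : ℝ) (p : ℂ × ℂ) (c : ℝ) (X : ℂ × ℂ) :
    JExpl φ p (c • X) = c • JExpl φ p X := by
  refine Prod.ext ?_ ?_ <;>
    simp only [JExpl, AForm_smul, Prod.smul_fst, Prod.smul_snd, real_smul, map_mul, map_sub,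
      map_div₀, conj_ofReal] <;>
    ring

lemma JExpl_snd (φ : ℝ) (p X : ℂ × ℂ) :
    (JExpl φ p X).2 = conj (I * exp (φ * I)) * conj (AForm p X) / (2 * √(wDef p)) := by
  simp only [JExpl, map_mul, map_div₀, map_ofNat, conj_ofReal]
  ring

lemma AForm_JExpl {p : ℂ × ℂ} (hp : p ∈ Uprime) (φ : ℝ) (X : ℂ × ℂ) :
    AForm p (JExpl φ p X) = -2 * √(wDef p) * conj (I * exp (φ * I)) * conj X.2 := by
  have hs := ofReal_sqrt_wDef_ne_zero hp
  simp only [AForm, JExpl, map_mul, map_sub, map_div₀, map_ofNat, conj_ofReal]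
  field_simp
  ring

lemma JExpl_JExpl {p : ℂ × ℂ} (hp : p ∈ Uprime) (φ : ℝ) (X : ℂ × ℂ) :
    JExpl φ p (JExpl φ p X) = -X := by
  have hs := ofReal_sqrt_wDef_ne_zero hp
  have he := I_mul_exp_mul_conj_self φ
  have h2 : (JExpl φ p (JExpl φ p X)).2 = -X.2 := by
    rw [JExpl_snd, AForm_JExpl hp]
    generalize I * exp (φ * I) = e at he ⊢
    simp only [map_mul, map_neg, map_ofNat, conj_ofReal, conj_conj]
    field_simp
    linear_combination (-X.2) * he
  have hA : AForm p (JExpl φ p (JExpl φ p X)) = -AForm p X := by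
    rw [AForm_JExpl hp, JExpl_snd]
    generalize I * exp (φ * I) = e at he ⊢
    simp only [map_mul, map_div₀, map_ofNat, conj_ofReal, conj_conj]
    field_simp
    linear_combination (-AForm p X) * he
  refine Prod.ext ?_ h2
  rw [fst_eq_AForm_add p, hA, h2, Prod.fst_neg, fst_eq_AForm_add p X]
  ring

lemma gExpl_JExpl {p : ℂ × ℂ} (hp : p ∈ Uprime) (φ : ℝ) (X Y : ℂ × ℂ) :
    gExpl p (JExpl φ p X) (JExpl φ p Y) = gExpl p X Y := by
  have hs' := ofReal_sqrt_wDef_ne_zero hp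
  have hs := ofReal_ne_zero.mp hs'
  have he := I_mul_exp_mul_conj_self φ
  have hA : AForm p (JExpl φ p X) * conj (AForm p (JExpl φ p Y)) =
      ((4 * √(wDef p) ^ 2 : ℝ) : ℂ) * conj (X.2 * conj Y.2) := by
    rw [AForm_JExpl hp, AForm_JExpl hp]
    generalize I * exp (φ * I) = e at he ⊢
    simp only [map_mul, map_neg, map_ofNat, conj_ofReal, conj_conj]
    push_cast
    linear_combination (4 * (√(wDef p) : ℂ) ^ 2 * conj X.2 * Y.2) * he
  have hB : (JExpl φ p X).2 * conj (JExpl φ p Y).2 =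
      conj (AForm p X * conj (AForm p Y)) / ((4 * √(wDef p) ^ 2 : ℝ) : ℂ) := by
    rw [JExpl_snd, JExpl_snd]
    generalize I * exp (φ * I) = e at he ⊢
    simp only [map_mul, map_div₀, map_ofNat, conj_ofReal, conj_conj]
    push_cast
    field_simp
    linear_combination (4 * conj (AForm p X) * AForm p Y) * he
  rw [gExpl, gExpl, hA, hB, re_ofReal_mul, div_ofReal_re, conj_re, conj_re]
  field_simp
  ring

/-- At every point of `U'`, `J⁺_{e^{iφ}}` is a real endomorphism of
the tangent space with `(J⁺_{e^{iφ}})² = −id`, compatible with the explicit metric `g`. -/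
theorem JExpl_almost_hermitian (φ : ℝ) :
    ∀ p ∈ Uprime,
      (∀ X Y : ℂ × ℂ, JExpl φ p (X + Y) = JExpl φ p X + JExpl φ p Y) ∧
      (∀ (c : ℝ) (X : ℂ × ℂ), JExpl φ p (c • X) = c • JExpl φ p X) ∧
      (∀ X : ℂ × ℂ, JExpl φ p (JExpl φ p X) = -X) ∧
      (∀ X Y : ℂ × ℂ, gExpl p (JExpl φ p X) (JExpl φ p Y) = gExpl p X Y) :=
  fun _ hp => ⟨JExpl_add φ _, JExpl_smul φ _, JExpl_JExpl hp φ, gExpl_JExpl hp φ⟩
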